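/- For every f ∈ L²(-π,π) with f absolutely continuous, periodic (f(-π)=f(π)), f' ∈ L², f ≠ 0, and all a, b ∈ ℂ: ‖(sin θ - a)f‖₂ · ‖(d/dθ - b)f‖₂ ≥ (1/2)|⟨(cos θ)f, f⟩|. -/

import Mathlib

open MeasureTheory Real
open Set

/-!
Put `u = (sin θ - Re a) f` and `v = f' - i (Im b) f`. Pointwise
`Re (ū v) = (sin θ - Re a) Re (f̄ f')`, and `2 Re (f̄ f')` is the a.e. derivative of the absolutely
continuous function `|f|²`. Integrating by parts against `sin θ - Re a` (the boundary term vanishes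
because `sin (±π) = 0` and `f` is periodic) gives `∫ cos θ |f|² = -2 Re ⟨u, v⟩`, and Cauchy–Schwarz
bounds this by `2 ‖u‖ ‖v‖`. Finally `|sin θ - a| ≥ |sin θ - Re a|` pointwise, and
`‖f' - b f‖² = ‖v‖² + (Re b)² ‖f‖²` since `∫ Re (f̄ f') = (|f π|² - |f (-π)|²) / 2 = 0`.
-/

theorem AbsolutelyContinuousOnInterval.congr {X : Type*} [PseudoMetricSpace X] {f g : ℝ → X}
    {a b : ℝ} (hf : AbsolutelyContinuousOnInterval f a b) (hfg : EqOn f g (uIcc a b)) :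
    AbsolutelyContinuousOnInterval g a b := by
  refine hf.congr' (Filter.eventually_inf_principal.2 (Filter.Eventually.of_forall ?_))
  rintro ⟨n, I⟩ ⟨hI, -⟩
  refine Finset.sum_congr rfl fun i hi => ?_
  rw [hfg (hI i hi).1, hfg (hI i hi).2]

theorem ContinuousOn.memLp_volume_restrict_Ioc {E : Type*} [NormedAddCommGroup E] {g : ℝ → E}
    {a b : ℝ} (hg : ContinuousOn g (Icc a b)) (p : ENNReal) :
    MemLp g p (volume.restrict (Ioc a b)) := by
  obtain ⟨C, hC⟩ := isCompact_Icc.exists_bound_of_continuousOn hg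
  refine MemLp.of_bound ((hg.mono Ioc_subset_Icc_self).aestronglyMeasurable measurableSet_Ioc) C ?_
  filter_upwards [ae_restrict_mem measurableSet_Ioc] with x hx using hC x (Ioc_subset_Icc_self hx)

section Primitive

variable {E : Type*} [NormedAddCommGroup E] [NormedSpace ℝ E] {f f' : ℝ → E} {a b : ℝ}

theorem continuousOn_of_eq_add_intervalIntegral
    (hf : ∀ x ∈ Icc a b, f x = f a + ∫ t in a..x, f' t) (hf' : IntervalIntegrable f' volume a b)
    (hab : a ≤ b) : ContinuousOn f (Icc a b) := by
  have hprim := intervalIntegral.continuousOn_primitive_interval' hf' left_mem_uIcc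
  rw [uIcc_of_le hab] at hprim
  exact (continuousOn_const.add hprim).congr hf

theorem absolutelyContinuousOnInterval_clm_comp_of_eq_add_intervalIntegral [CompleteSpace E]
    (L : E →L[ℝ] ℝ)
    (hf : ∀ x ∈ Icc a b, f x = f a + ∫ t in a..x, f' t) (hf' : IntervalIntegrable f' volume a b)
    (hab : a ≤ b) :
    AbsolutelyContinuousOnInterval (fun x => L (f x)) a b := by
  have hprim := ((LipschitzWith.const (L (f a))).lipschitzOnWith (s := uIcc a b)
    ).absolutelyContinuousOnInterval.add
    (IntervalIntegrable.absolutelyContinuousOnInterval_intervalIntegral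
      ⟨L.integrable_comp hf'.1, L.integrable_comp hf'.2⟩ (c := a) left_mem_uIcc)
  refine hprim.congr fun x hx => ?_
  rw [uIcc_of_le hab] at hx
  have hf'x : IntervalIntegrable f' volume a x :=
    hf'.mono_set (uIcc_subset_uIcc left_mem_uIcc (by rwa [uIcc_of_le hab]))
  simp [hf x hx, L.intervalIntegral_comp_comm hf'x]

theorem ae_hasDerivAt_of_eq_add_intervalIntegral [CompleteSpace E]
    (hf : ∀ x ∈ Icc a b, f x = f a + ∫ t in a..x, f' t) (hf' : IntervalIntegrable f' volume a b) :
    ∀ᵐ x, x ∈ Ioo a b → HasDerivAt f (f' x) x := by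
  filter_upwards [hf'.ae_hasDerivAt_integral] with x hx hxab
  have hab : a ≤ b := (hxab.1.trans hxab.2).le
  have hxI : x ∈ uIcc a b := by rw [uIcc_of_le hab]; exact Ioo_subset_Icc_self hxab
  refine ((hx hxI a left_mem_uIcc).const_add (f a)).congr_of_eventuallyEq ?_
  filter_upwards [Ioo_mem_nhds hxab.1 hxab.2] with y hy using hf y (Ioo_subset_Icc_self hy)

end Primitive

section CauchySchwarz

variable {α E : Type*} [MeasurableSpace α] {μ : Measure α} [NormedAddCommGroup E]
  [InnerProductSpace ℝ E] {u v : α → E}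

theorem MeasureTheory.MemLp.integrable_inner (hu : MemLp u 2 μ) (hv : MemLp v 2 μ) :
    Integrable (fun x => inner ℝ (u x) (v x)) μ :=
  (hu.norm.integrable_mul hv.norm).mono (hu.1.inner hv.1) <|
    Filter.Eventually.of_forall fun x => by
      simpa using abs_real_inner_le_norm (u x) (v x)

theorem abs_integral_inner_le_L2_mul_L2 (hu : MemLp u 2 μ) (hv : MemLp v 2 μ) :
    |∫ x, inner ℝ (u x) (v x) ∂μ| ≤
      (∫ x, ‖u x‖ ^ 2 ∂μ) ^ ((1 : ℝ) / 2) * (∫ x, ‖v x‖ ^ 2 ∂μ) ^ ((1 : ℝ) / 2) := by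
  have hHolder := integral_mul_norm_le_Lp_mul_Lq (μ := μ) Real.HolderConjugate.two_two
    (by simpa using hu) (by simpa using hv)
  simp only [Real.rpow_two] at hHolder
  calc |∫ x, inner ℝ (u x) (v x) ∂μ|
      ≤ ∫ x, |inner ℝ (u x) (v x)| ∂μ := abs_integral_le_integral_abs
    _ ≤ ∫ x, ‖u x‖ * ‖v x‖ ∂μ :=
        integral_mono (hu.integrable_inner hv).abs (hu.norm.integrable_mul hv.norm)
          fun x => abs_real_inner_le_norm (u x) (v x)
    _ ≤ _ := hHolder

end CauchySchwarz

theorem Complex.inner_ofReal_mul_sub_ofReal_mul_I_mul (r s : ℝ) (z w : ℂ) :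
    inner ℝ ((r : ℂ) * z) (w - (s * I) * z) = r * inner ℝ z w := by
  simp only [Complex.inner, map_mul, Complex.conj_ofReal, Complex.mul_re, Complex.sub_re,
    Complex.mul_im, Complex.sub_im, Complex.ofReal_re, Complex.ofReal_im, Complex.I_re,
    Complex.I_im, Complex.conj_re, Complex.conj_im]
  ring

theorem Complex.norm_sub_mul_sq (w z b : ℂ) :
    ‖w - b * z‖ ^ 2 =
      ‖w - (b.im * I) * z‖ ^ 2 - 2 * b.re * inner ℝ z w + b.re ^ 2 * ‖z‖ ^ 2 := by
  simp only [Complex.sq_norm, Complex.normSq_apply, Complex.inner, Complex.mul_re, Complex.sub_re,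
    Complex.mul_im, Complex.sub_im, Complex.ofReal_re, Complex.ofReal_im, Complex.I_re,
    Complex.I_im, Complex.conj_re, Complex.conj_im]
  ring

theorem Complex.norm_ofReal_sub_re_mul_le (r : ℝ) (a z : ℂ) :
    ‖((r - a.re : ℝ) : ℂ) * z‖ ≤ ‖(r : ℂ) * z - a * z‖ := by
  rw [← sub_mul, norm_mul, norm_mul]
  gcongr
  rw [Complex.norm_real, Real.norm_eq_abs]
  simpa using Complex.abs_re_le_norm ((r : ℂ) - a)

theorem integral_norm_ofReal_sub_re_mul_sq_le {α : Type*} [MeasurableSpace α] {μ : Measure α}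
    {φ : α → ℝ} {g : α → ℂ} (a : ℂ)
    (h : Integrable (fun x => ‖(φ x : ℂ) * g x - a * g x‖ ^ 2) μ) :
    ∫ x, ‖((φ x - a.re : ℝ) : ℂ) * g x‖ ^ 2 ∂μ ≤ ∫ x, ‖(φ x : ℂ) * g x - a * g x‖ ^ 2 ∂μ :=
  integral_mono_of_nonneg (Filter.Eventually.of_forall fun _ => by positivity) h <|
    Filter.Eventually.of_forall fun x =>
      pow_le_pow_left₀ (norm_nonneg _) (Complex.norm_ofReal_sub_re_mul_le _ _ _) 2

section NormSq

variable {f f' : ℝ → ℂ} {a b : ℝ}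

theorem absolutelyContinuousOnInterval_norm_sq_of_eq_add_intervalIntegral
    (hf : ∀ x ∈ Icc a b, f x = f a + ∫ t in a..x, f' t) (hf' : IntervalIntegrable f' volume a b)
    (hab : a ≤ b) :
    AbsolutelyContinuousOnInterval (fun x => ‖f x‖ ^ 2) a b := by
  have hre := absolutelyContinuousOnInterval_clm_comp_of_eq_add_intervalIntegral
    Complex.reCLM hf hf' hab
  have him := absolutelyContinuousOnInterval_clm_comp_of_eq_add_intervalIntegral
    Complex.imCLM hf hf' hab
  refine ((hre.fun_mul hre).add (him.fun_mul him)).congr fun x _ => ?_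
  simp only [Pi.add_apply, Complex.reCLM_apply, Complex.imCLM_apply, ← Complex.normSq_apply,
    Complex.sq_norm]

theorem two_mul_integral_mul_inner_eq_of_eq_add_intervalIntegral {φ : ℝ → ℝ}
    (hφ : AbsolutelyContinuousOnInterval φ a b)
    (hf : ∀ x ∈ Icc a b, f x = f a + ∫ t in a..x, f' t) (hf' : IntervalIntegrable f' volume a b)
    (hab : a ≤ b) :
    2 * ∫ x in a..b, φ x * inner ℝ (f x) (f' x) =
      φ b * ‖f b‖ ^ 2 - φ a * ‖f a‖ ^ 2 - ∫ x in a..b, deriv φ x * ‖f x‖ ^ 2 := by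
  have hderiv :
      ∀ᵐ x, x ∈ uIoc a b → deriv (fun y => ‖f y‖ ^ 2) x = 2 * inner ℝ (f x) (f' x) := by
    filter_upwards [ae_hasDerivAt_of_eq_add_intervalIntegral hf hf', Measure.ae_ne volume b]
      with x hx hxb hxab
    rw [uIoc_of_le hab] at hxab
    exact (hx ⟨hxab.1, lt_of_le_of_ne hxab.2 hxb⟩).norm_sq.deriv
  rw [← hφ.integral_mul_deriv_eq_deriv_mul
    (absolutelyContinuousOnInterval_norm_sq_of_eq_add_intervalIntegral hf hf' hab),
    ← intervalIntegral.integral_const_mul]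
  refine intervalIntegral.integral_congr_ae ?_
  filter_upwards [hderiv] with x hx hxab
  rw [hx hxab]
  ring

theorem integral_inner_eq_zero_of_eq_add_intervalIntegral
    (hf : ∀ x ∈ Icc a b, f x = f a + ∫ t in a..x, f' t) (hf' : IntervalIntegrable f' volume a b)
    (hab : a ≤ b) (hper : f a = f b) :
    ∫ x in a..b, inner ℝ (f x) (f' x) = 0 := by
  have h := two_mul_integral_mul_inner_eq_of_eq_add_intervalIntegral
    (LipschitzWith.const (1 : ℝ)).lipschitzOnWith.absolutelyContinuousOnInterval hf hf' hab
  simpa [hper] using h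

theorem integral_norm_sub_I_mul_sq_le_of_eq_add_intervalIntegral
    (hf : ∀ x ∈ Icc a b, f x = f a + ∫ t in a..x, f' t)
    (hf' : MemLp f' 2 (volume.restrict (Ioc a b))) (hab : a ≤ b) (hper : f a = f b) (c : ℂ) :
    ∫ x in Ioc a b, ‖f' x - (c.im * Complex.I) * f x‖ ^ 2 ≤
      ∫ x in Ioc a b, ‖f' x - c * f x‖ ^ 2 := by
  have hf'i : IntervalIntegrable f' volume a b :=
    (intervalIntegrable_iff_integrableOn_Ioc_of_le hab).2 (hf'.integrable one_le_two)
  have hf2 : MemLp f 2 (volume.restrict (Ioc a b)) :=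
    (continuousOn_of_eq_add_intervalIntegral hf hf'i hab).memLp_volume_restrict_Ioc 2
  have hinner : ∫ x in Ioc a b, inner ℝ (f x) (f' x) = 0 := by
    rw [← intervalIntegral.integral_of_le hab]
    exact integral_inner_eq_zero_of_eq_add_intervalIntegral hf hf'i hab hper
  have hv : Integrable (fun x => ‖f' x - (c.im * Complex.I) * f x‖ ^ 2)
      (volume.restrict (Ioc a b)) :=
    (hf'.sub (hf2.const_mul _)).integrable_norm_pow two_ne_zero
  have hcross : Integrable (fun x => 2 * c.re * inner ℝ (f x) (f' x))
      (volume.restrict (Ioc a b)) :=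
    (hf2.integrable_inner hf').const_mul _
  calc ∫ x in Ioc a b, ‖f' x - (c.im * Complex.I) * f x‖ ^ 2
      = ∫ x in Ioc a b,
          (‖f' x - (c.im * Complex.I) * f x‖ ^ 2 - 2 * c.re * inner ℝ (f x) (f' x)) := by
        rw [integral_sub hv hcross, integral_const_mul, hinner, mul_zero, sub_zero]
    _ ≤ ∫ x in Ioc a b, ‖f' x - c * f x‖ ^ 2 := by
        refine integral_mono (hv.sub hcross)
          ((hf'.sub (hf2.const_mul c)).integrable_norm_pow two_ne_zero) fun x => ?_
        rw [Complex.norm_sub_mul_sq (f' x) (f x) c]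
        nlinarith [sq_nonneg c.re, sq_nonneg ‖f x‖]

end NormSq

section Circle

variable {f f' : ℝ → ℂ}

theorem integral_cos_mul_norm_sq_eq_of_eq_add_intervalIntegral
    (hf : ∀ x ∈ Icc (-π) π, f x = f (-π) + ∫ t in (-π)..x, f' t)
    (hf' : IntervalIntegrable f' volume (-π) π) (hper : f (-π) = f π) (α : ℝ) :
    ∫ x in (-π)..π, cos x * ‖f x‖ ^ 2 =
      -2 * ∫ x in (-π)..π, (sin x - α) * inner ℝ (f x) (f' x) := by
  have hφ : AbsolutelyContinuousOnInterval (fun x => sin x - α) (-π) π :=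
    (contDiff_sin.sub contDiff_const).contDiffOn.absolutelyContinuousOnInterval
  rw [neg_mul, two_mul_integral_mul_inner_eq_of_eq_add_intervalIntegral hφ hf hf'
    (by linarith [pi_pos]), hper]
  simp

theorem norm_integral_cos_mul_mul_conj_eq_of_eq_add_intervalIntegral
    (hf : ∀ x ∈ Icc (-π) π, f x = f (-π) + ∫ t in (-π)..x, f' t)
    (hf' : IntervalIntegrable f' volume (-π) π) (hper : f (-π) = f π) (α β : ℝ) :
    ‖∫ θ in (-π)..π, (cos θ : ℂ) * f θ * (starRingEnd ℂ) (f θ)‖ =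
      2 * |∫ x in (-π)..π,
        inner ℝ (((sin x - α : ℝ) : ℂ) * f x) (f' x - (β * Complex.I) * f x)| := by
  have hreal : ∫ θ in (-π)..π, (cos θ : ℂ) * f θ * (starRingEnd ℂ) (f θ) =
      ((∫ θ in (-π)..π, cos θ * ‖f θ‖ ^ 2 : ℝ) : ℂ) := by
    rw [← intervalIntegral.integral_ofReal]
    simp only [mul_assoc, Complex.mul_conj, Complex.normSq_eq_norm_sq, Complex.ofReal_mul,
      Complex.ofReal_pow]
  simp only [hreal, Complex.norm_real, Real.norm_eq_abs,
    Complex.inner_ofReal_mul_sub_ofReal_mul_I_mul,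
    integral_cos_mul_norm_sq_eq_of_eq_add_intervalIntegral hf hf' hper α, abs_mul, abs_neg, abs_two]

end Circle

theorem sine_uncertainty_circle_general
    (f f' : ℝ → ℂ)
    (hAC : ∀ θ ∈ Set.Icc (-π) π, f θ = f (-π) + ∫ t in (-π)..θ, f' t)
    (hf' : MemLp f' 2 (volume.restrict (Set.Ioc (-π) π)))
    (hper : f (-π) = f π)
    (a b : ℂ) :
    (∫ θ in (-π)..π, ‖(Real.sin θ : ℂ) * f θ - a * f θ‖ ^ 2) ^ ((1 : ℝ) / 2)
      * (∫ θ in (-π)..π, ‖f' θ - b * f θ‖ ^ 2) ^ ((1 : ℝ) / 2)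
    ≥ (1 / 2) * ‖∫ θ in (-π)..π,
        (Real.cos θ : ℂ) * f θ * (starRingEnd ℂ) (f θ)‖ := by
  have hpi : -π ≤ π := by linarith [pi_pos]
  have hf'i : IntervalIntegrable f' volume (-π) π :=
    (intervalIntegrable_iff_integrableOn_Ioc_of_le hpi).2 (hf'.integrable one_le_two)
  have hfc := continuousOn_of_eq_add_intervalIntegral hAC hf'i hpi
  have hsin : Continuous fun x => (sin x : ℂ) := Complex.continuous_ofReal.comp continuous_sin
  have hu : MemLp (fun x => ((sin x - a.re : ℝ) : ℂ) * f x) 2 (volume.restrict (Ioc (-π) π)) :=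
    ((Complex.continuous_ofReal.comp (continuous_sin.sub continuous_const)).continuousOn.mul
      hfc).memLp_volume_restrict_Ioc 2
  have hv : MemLp (fun x => f' x - (b.im * Complex.I) * f x) 2 (volume.restrict (Ioc (-π) π)) :=
    hf'.sub ((hfc.memLp_volume_restrict_Ioc 2).const_mul _)
  have hu_le := integral_norm_ofReal_sub_re_mul_sq_le (μ := volume.restrict (Ioc (-π) π))
    (φ := sin) a <| ((hsin.continuousOn.mul hfc).sub (continuousOn_const.mul hfc)
      ).memLp_volume_restrict_Ioc 2 |>.integrable_norm_pow two_ne_zero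
  have hv_le := integral_norm_sub_I_mul_sq_le_of_eq_add_intervalIntegral hAC hf' hpi hper b
  rw [ge_iff_le, norm_integral_cos_mul_mul_conj_eq_of_eq_add_intervalIntegral hAC hf'i hper
    a.re b.im]
  simp only [intervalIntegral.integral_of_le hpi]
  rw [← mul_assoc, show (1 : ℝ) / 2 * 2 = 1 by norm_num, one_mul]
  exact (abs_integral_inner_le_L2_mul_L2 hu hv).trans (by gcongr)

/-- Uncertainty principle on the circle with `sin θ` as position operator: for
`f ∈ L²(-π,π)` absolutely continuous, periodic, with `f' ∈ L²` and `f ≠ 0`,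
`‖(sin θ - a) f‖₂ ‖(d/dθ - b) f‖₂ ≥ (1/2) |⟨(cos θ) f, f⟩|`. -/
theorem sine_uncertainty_circle
    (f f' : ℝ → ℂ)
    (hAC : ∀ θ ∈ Set.Icc (-π) π, f θ = f (-π) + ∫ t in (-π)..θ, f' t)
    (hf' : MemLp f' 2 (volume.restrict (Set.Ioc (-π) π)))
    (hper : f (-π) = f π)
    (hne : ∃ θ ∈ Set.Icc (-π) π, f θ ≠ 0)
    (a b : ℂ) :
    (∫ θ in (-π)..π, ‖(Real.sin θ : ℂ) * f θ - a * f θ‖ ^ 2) ^ ((1 : ℝ) / 2)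
      * (∫ θ in (-π)..π, ‖f' θ - b * f θ‖ ^ 2) ^ ((1 : ℝ) / 2)
    ≥ (1 / 2) * ‖∫ θ in (-π)..π,
        (Real.cos θ : ℂ) * f θ * (starRingEnd ℂ) (f θ)‖ :=
  sine_uncertainty_circle_general f f' hAC hf' hper a b
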